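/- Let Ω > 0, λ > 0, T > 0, N ∈ ℕ, and let g ∈ PW_Ω with β ≥ sup_{t ∈ ℝ} |g(t)| satisfying (TΩe)^N · β < λ. Define γ[k] = g(kT) and the modulo samples y[k] = M_λ(γ[k]) for k ∈ ℤ. Then for every k ∈ ℤ: (Δ^N γ)[k] = M_λ((Δ^N y)[k]). Consequently, the residual ε[k] = γ[k] − y[k], which takes values in 2λℤ, satisfies (Δ^N ε)[k] = M_λ((Δ^N y)[k]) − (Δ^N y)[k] for every k ∈ ℤ, so Δ^N ε is computable from the modulo samples alone. -/

import Mathlib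

open MeasureTheory Real

/-- The centered `2λ`-modulo operator `M_λ(t) = t − 2λ·⌊(t + λ)/(2λ)⌋`. -/
noncomputable def Mlam (lam t : ℝ) : ℝ := t - 2 * lam * ⌊(t + lam) / (2 * lam)⌋

/-- Membership in the Paley–Wiener space `PW_Ω`: `g(t) = ∫_{−Ω}^{Ω} φ(ω) e^{iωt} dω`
for some square-integrable `φ : [−Ω,Ω] → ℂ`. -/
def IsPW (Ω : ℝ) (g : ℝ → ℝ) : Prop :=
  ∃ φ : ℝ → ℂ, MemLp φ 2 (volume.restrict (Set.Icc (-Ω) Ω)) ∧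
    ∀ t : ℝ, (g t : ℂ) =
      ∫ ω in Set.Icc (-Ω) Ω, φ ω * Complex.exp (Complex.I * (ω : ℂ) * (t : ℂ))

/-- The forward difference operator `(Δa)[k] = a[k+1] − a[k]` on sequences. -/
noncomputable def fdiff (a : ℤ → ℝ) : ℤ → ℝ := fun k => a (k + 1) - a k

/-!
`γ − y` takes values in `2λℤ` and `Δ^N` has integer coefficients, so `Δ^N γ ≡ Δ^N y` modulo
`2λℤ` and hence `M_λ(Δ^N y) = M_λ(Δ^N γ)`, which is `Δ^N γ` as soon as `|Δ^N γ| < λ`.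

That bound comes from Bernstein's inequality `‖g'‖∞ ≤ Ω ‖g‖∞` on `PW_Ω`: by the mean value theorem
`|g(t + T) − g(t)| ≤ TΩ ‖g‖∞`, and `t ↦ g(t + T) − g(t)` is again in `PW_Ω`, so
`|Δ^N γ| ≤ (TΩ)^N β ≤ (TΩe)^N β < λ`. Bernstein's inequality itself follows from an absolutely
convergent expansion of the multiplier `iω` on `[−Ω, Ω]` in exponentials `e^{iωτ}`, which writes
`g'` as a combination of translates of `g` with total weight `Ω`.
-/

open Set fwdDiff

section fwdDiff

variable {M M' G G' : Type*} [AddCommMonoid M] [AddCommMonoid M'] [AddCommGroup G] [AddCommGroup G']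

lemma fwdDiff_iter_sub (h : M) (f g : M → G) (n : ℕ) (y : M) :
    (Δ_[h])^[n] (fun x => f x - g x) y = (Δ_[h])^[n] f y - (Δ_[h])^[n] g y := by
  rw [← fwdDiff_aux.coe_fwdDiffₗ_pow]
  exact congrFun (map_sub _ f g) y

lemma fwdDiff_iter_addMonoidHom_comp (φ : G →+ G') (h : M) (f : M → G) (n : ℕ) :
    (Δ_[h])^[n] (φ ∘ f) = φ ∘ (Δ_[h])^[n] f := by
  induction n generalizing f with
  | zero => rfl
  | succ n ih =>
    rw [Function.iterate_succ_apply, Function.iterate_succ_apply, ← ih]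
    congr 1
    ext y
    simp [fwdDiff]

lemma fwdDiff_iter_comp_addMonoidHom (ψ : M →+ M') (h : M) (f : M' → G) (n : ℕ) :
    (Δ_[h])^[n] (f ∘ ψ) = (Δ_[ψ h])^[n] f ∘ ψ := by
  induction n generalizing f with
  | zero => rfl
  | succ n ih =>
    rw [Function.iterate_succ_apply, Function.iterate_succ_apply, ← ih]
    congr 1
    ext y
    simp [fwdDiff]

lemma fwdDiff_iter_mem_addSubgroup (S : AddSubgroup G) (h : M) {f : M → G} (hf : ∀ y, f y ∈ S)
    (n : ℕ) (y : M) : (Δ_[h])^[n] f y ∈ S := by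
  induction n generalizing f with
  | zero => exact hf y
  | succ n ih => exact ih fun y => S.sub_mem (hf _) (hf _)

end fwdDiff

lemma fdiff_eq_fwdDiff : fdiff = Δ_[1] := rfl

lemma sub_Mlam_mem_zmultiples (lam x : ℝ) : x - Mlam lam x ∈ AddSubgroup.zmultiples (2 * lam) :=
  ⟨⌊(x + lam) / (2 * lam)⌋, by simp only [Mlam, zsmul_eq_mul]; ring⟩

section Mlam

variable {lam : ℝ}

lemma Mlam_eq_of_sub_mem_zmultiples (hlam : lam ≠ 0) {x y : ℝ}
    (hxy : x - y ∈ AddSubgroup.zmultiples (2 * lam)) : Mlam lam x = Mlam lam y := by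
  obtain ⟨j, hj : j • (2 * lam) = x - y⟩ := hxy
  rw [zsmul_eq_mul, eq_sub_iff_add_eq'] at hj
  have h : (x + lam) / (2 * lam) = (y + lam) / (2 * lam) + j := by
    rw [← hj]
    field_simp
    ring
  rw [Mlam, Mlam, h, Int.floor_add_intCast, ← hj]
  push_cast
  ring

lemma Mlam_eq_self (hlam : 0 < lam) {x : ℝ} (hx : x ∈ Ico (-lam) lam) : Mlam lam x = x := by
  have h : ⌊(x + lam) / (2 * lam)⌋ = 0 := by
    rw [Int.floor_eq_zero_iff, mem_Ico, le_div_iff₀ (by positivity), div_lt_one (by positivity)]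
    constructor <;> linarith [hx.1, hx.2]
  simp [Mlam, h]

lemma Mlam_fwdDiff_iter_Mlam {M : Type*} [AddCommMonoid M] (hlam : 0 < lam) (h : M) (a : M → ℝ)
    (n : ℕ) {y : M} (hy : |(Δ_[h])^[n] a y| < lam) :
    Mlam lam ((Δ_[h])^[n] (fun m => Mlam lam (a m)) y) = (Δ_[h])^[n] a y := by
  have hres : (Δ_[h])^[n] a y - (Δ_[h])^[n] (fun m => Mlam lam (a m)) y ∈
      AddSubgroup.zmultiples (2 * lam) := by
    rw [← fwdDiff_iter_sub]
    exact fwdDiff_iter_mem_addSubgroup _ h (fun m => sub_Mlam_mem_zmultiples lam (a m)) n y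
  rw [← Mlam_eq_of_sub_mem_zmultiples hlam.ne' hres,
    Mlam_eq_self hlam ⟨(abs_lt.1 hy).1.le, (abs_lt.1 hy).2⟩]

end Mlam

lemma hasSum_cos_mul_div_sq {θ : ℝ} (hθ : θ ∈ Icc 0 (2 * π)) :
    HasSum (fun n : ℕ => cos (n * θ) / n ^ 2) (θ ^ 2 / 4 - π * θ / 2 + π ^ 2 / 6) := by
  have hx : θ / (2 * π) ∈ Icc (0 : ℝ) 1 :=
    ⟨by have := hθ.1; positivity, (div_le_one (by positivity)).2 hθ.2⟩
  convert hasSum_one_div_nat_pow_mul_cos one_ne_zero hx using 1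
  · ext n
    rw [mul_one, one_div_mul_eq_div, mul_right_comm, mul_div_cancel₀ _ (by positivity), mul_comm]
  · change _ = _ * bernoulliFun 2 _
    rw [bernoulliFun_two]
    field_simp
    norm_num [Nat.factorial]
    ring

lemma hasSum_cos_odd_mul_div_sq {θ : ℝ} (hθ : θ ∈ Icc 0 π) :
    HasSum (fun n : ℕ => cos ((2 * n + 1) * θ) / (2 * n + 1) ^ 2) (π ^ 2 / 8 - π * θ / 4) := by
  set f : ℕ → ℝ := fun n => cos (n * θ) / n ^ 2
  have hall : HasSum f (θ ^ 2 / 4 - π * θ / 2 + π ^ 2 / 6) :=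
    hasSum_cos_mul_div_sq ⟨hθ.1, by linarith [hθ.2, pi_pos]⟩
  have heven :
      HasSum (fun n => f (2 * n)) (((2 * θ) ^ 2 / 4 - π * (2 * θ) / 2 + π ^ 2 / 6) / 4) := by
    refine ((hasSum_cos_mul_div_sq ⟨by linarith [hθ.1], by linarith [hθ.2]⟩).div_const 4).congr_fun
      fun n => ?_
    simp only [f]
    push_cast
    ring_nf
  obtain ⟨s, hodd⟩ : Summable fun n => f (2 * n + 1) :=
    hall.summable.comp_injective fun a b hab => by omega
  have hs : s = π ^ 2 / 8 - π * θ / 4 := by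
    linarith [(heven.even_add_odd hodd).unique hall]
  subst hs
  refine hodd.congr_fun fun n => ?_
  simp only [f]
  push_cast
  ring_nf

lemma hasSum_alternating_sin_odd_mul_div_sq {θ : ℝ} (hθ : θ ∈ Icc (-(π / 2)) (π / 2)) :
    HasSum (fun n : ℕ => (-1) ^ n * sin ((2 * n + 1) * θ) / (2 * n + 1) ^ 2) (π * θ / 4) := by
  have hminus := hasSum_cos_odd_mul_div_sq (θ := π / 2 - θ) ⟨by linarith [hθ.2], by linarith [hθ.1]⟩
  have hplus := hasSum_cos_odd_mul_div_sq (θ := π / 2 + θ) ⟨by linarith [hθ.1], by linarith [hθ.2]⟩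
  have h := (hminus.sub hplus).div_const 2
  rw [show π ^ 2 / 8 - π * (π / 2 - θ) / 4 - (π ^ 2 / 8 - π * (π / 2 + θ) / 4) = 2 * (π * θ / 4) by
    ring, mul_div_cancel_left₀ _ two_ne_zero] at h
  refine h.congr_fun fun n => ?_
  have hsin : sin ((2 * n + 1) * (π / 2)) = (-1) ^ n := by
    rw [show (2 * n + 1) * (π / 2) = n * π + π / 2 by ring, sin_add_pi_div_two, cos_nat_mul_pi]
  rw [mul_sub, mul_add, cos_sub, cos_add, hsin]
  ring

lemma hasSum_one_div_odd_sq : HasSum (fun n : ℕ => 1 / (2 * (n : ℝ) + 1) ^ 2) (π ^ 2 / 8) := by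
  simpa using hasSum_cos_odd_mul_div_sq ⟨le_rfl, pi_pos.le⟩

/-- On `[-Ω, Ω]`, `i ω = ∑ₙ aₙ (e^{i ω τₙ} - e^{-i ω τₙ})` with these coefficients `aₙ` and nodes
`τₙ`: this is the Fourier series of the triangle wave, and `∑ₙ |aₙ| = Ω / 2`. -/
noncomputable def bernsteinCoeff (Ω : ℝ) (n : ℕ) : ℝ := 4 * Ω / π ^ 2 * ((-1) ^ n / (2 * n + 1) ^ 2)

noncomputable def bernsteinNode (Ω : ℝ) (n : ℕ) : ℝ := (2 * n + 1) * π / (2 * Ω)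

lemma hasSum_abs_bernsteinCoeff {Ω : ℝ} (hΩ : 0 ≤ Ω) :
    HasSum (fun n => |bernsteinCoeff Ω n|) (Ω / 2) := by
  have h := hasSum_one_div_odd_sq.mul_left (4 * Ω / π ^ 2)
  rw [show 4 * Ω / π ^ 2 * (π ^ 2 / 8) = Ω / 2 by field_simp; ring] at h
  refine h.congr_fun fun n => ?_
  rw [bernsteinCoeff, abs_mul, abs_of_nonneg (by positivity : 0 ≤ 4 * Ω / π ^ 2), abs_div,
    abs_pow, abs_neg, abs_one, one_pow, abs_of_nonneg (by positivity : (0 : ℝ) ≤ (2 * n + 1) ^ 2)]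

lemma hasSum_bernsteinCoeff_mul_sin {Ω ω : ℝ} (hΩ : 0 < Ω) (hω : ω ∈ Icc (-Ω) Ω) :
    HasSum (fun n => bernsteinCoeff Ω n * (2 * sin (ω * bernsteinNode Ω n))) ω := by
  have hθ : ω * π / (2 * Ω) ∈ Icc (-(π / 2)) (π / 2) := by
    constructor <;> [rw [le_div_iff₀ (by positivity)]; rw [div_le_iff₀ (by positivity)]] <;>
      nlinarith [hω.1, hω.2, pi_pos]
  have h := (hasSum_alternating_sin_odd_mul_div_sq hθ).mul_left (8 * Ω / π ^ 2)
  rw [show 8 * Ω / π ^ 2 * (π * (ω * π / (2 * Ω)) / 4) = ω by field_simp; ring] at h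
  refine h.congr_fun fun n => ?_
  rw [bernsteinCoeff, bernsteinNode]
  ring_nf

open Complex

lemma hasSum_bernsteinCoeff_mul_cexp_sub {Ω ω : ℝ} (hΩ : 0 < Ω) (hω : ω ∈ Icc (-Ω) Ω) :
    HasSum (fun n => (bernsteinCoeff Ω n : ℂ) *
      (exp (I * ω * bernsteinNode Ω n) - exp (I * ω * (-bernsteinNode Ω n : ℝ)))) (I * ω) := by
  refine ((hasSum_ofReal.2 (hasSum_bernsteinCoeff_mul_sin hΩ hω)).mul_left I).congr_fun
    fun n => ?_
  have hexp (x : ℂ) : exp (I * x) - exp (I * -x) = I * (2 * Complex.sin x) := by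
    rw [mul_comm _ x, mul_comm _ (-x), exp_mul_I, exp_mul_I, Complex.cos_neg, Complex.sin_neg]
    ring
  rw [ofReal_neg, mul_neg, mul_assoc, ← mul_neg, hexp]
  push_cast
  ring

noncomputable def bandlimited (Ω : ℝ) (φ : ℝ → ℂ) (t : ℝ) : ℂ :=
  ∫ ω in Icc (-Ω) Ω, φ ω * exp (I * ω * t)

lemma norm_cexp_I_mul_mul (ω t : ℝ) : ‖exp (I * ω * t)‖ = 1 := by
  rw [mul_assoc, ← ofReal_mul, norm_exp_I_mul_ofReal]

lemma MeasureTheory.Integrable.mul_cexp_I_mul {μ : Measure ℝ} {φ : ℝ → ℂ} (hφ : Integrable φ μ)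
    (t : ℝ) :
    Integrable (fun ω => φ ω * exp (I * ω * t)) μ :=
  hφ.mul_bdd (by fun_prop) (ae_of_all _ fun ω => (norm_cexp_I_mul_mul ω t).le)

lemma MeasureTheory.Integrable.cexp_I_mul_sub_one_mul {μ : Measure ℝ} {φ : ℝ → ℂ}
    (hφ : Integrable φ μ) (T : ℝ) :
    Integrable (fun ω : ℝ => (exp (I * ω * T) - 1) * φ ω) μ :=
  hφ.bdd_mul (c := 2) (by fun_prop) <| ae_of_all _ fun ω =>
    (norm_sub_le _ _).trans (by rw [norm_cexp_I_mul_mul, norm_one]; norm_num)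

section bandlimited

variable {Ω : ℝ} {φ : ℝ → ℂ}

lemma fwdDiff_bandlimited (hφ : Integrable φ (volume.restrict (Icc (-Ω) Ω))) (T : ℝ) :
    Δ_[T] (bandlimited Ω φ) = bandlimited Ω (fun ω => (exp (I * ω * T) - 1) * φ ω) := by
  ext t
  rw [fwdDiff, bandlimited, bandlimited, bandlimited,
    ← integral_sub (hφ.mul_cexp_I_mul _) (hφ.mul_cexp_I_mul _)]
  congr 1 with ω
  rw [ofReal_add, mul_add, Complex.exp_add]
  ring

lemma hasDerivAt_bandlimited (hφ : Integrable φ (volume.restrict (Icc (-Ω) Ω))) (t : ℝ) :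
    HasDerivAt (bandlimited Ω φ) (bandlimited Ω (fun ω => I * ω * φ ω) t) t := by
  have hderiv (ω x : ℝ) : HasDerivAt (fun x : ℝ => φ ω * exp (I * ω * x))
      (I * ω * φ ω * exp (I * ω * x)) x := by
    have := (((hasDerivAt_id x).ofReal_comp).const_mul (I * ω)).cexp.const_mul (φ ω)
    simpa [mul_comm, mul_left_comm, mul_assoc] using this
  refine (hasDerivAt_integral_of_dominated_loc_of_deriv_le (bound := fun ω => Ω * ‖φ ω‖)
    Filter.univ_mem
    (Filter.Eventually.of_forall fun x => (hφ.mul_cexp_I_mul x).aestronglyMeasurable)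
    (hφ.mul_cexp_I_mul t) (by fun_prop) ?_ (hφ.norm.const_mul Ω)
    (ae_of_all _ fun ω x _ => hderiv ω x)).2
  filter_upwards [ae_restrict_mem measurableSet_Icc] with ω hω x _
  rw [norm_mul, norm_cexp_I_mul_mul, mul_one, norm_mul, norm_mul, norm_I, one_mul, norm_real,
    Real.norm_eq_abs]
  exact mul_le_mul_of_nonneg_right (abs_le.2 hω) (norm_nonneg _)

lemma hasSum_bandlimited_I_mul (hΩ : 0 < Ω) (hφ : Integrable φ (volume.restrict (Icc (-Ω) Ω)))
    (u : ℝ) :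
    HasSum (fun n => (bernsteinCoeff Ω n : ℂ) *
      (bandlimited Ω φ (u + bernsteinNode Ω n) - bandlimited Ω φ (u - bernsteinNode Ω n)))
      (bandlimited Ω (fun ω => I * ω * φ ω) u) := by
  set a := bernsteinCoeff Ω
  set τ := bernsteinNode Ω
  have ha := hasSum_abs_bernsteinCoeff hΩ.le
  have hF (n : ℕ) : Integrable (fun ω : ℝ => (a n : ℂ) *
      (φ ω * exp (I * ω * ↑(u + τ n)) - φ ω * exp (I * ω * ↑(u - τ n))))
      (volume.restrict (Icc (-Ω) Ω)) :=
    ((hφ.mul_cexp_I_mul _).sub (hφ.mul_cexp_I_mul _)).const_mul _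
  refine (hasSum_integral_of_dominated_convergence (fun n ω => |a n| * (2 * ‖φ ω‖))
    (fun n => (hF n).aestronglyMeasurable) (fun n => ae_of_all _ fun ω => ?_)
    (ae_of_all _ fun ω => (ha.mul_right _).summable) ?_ ?_).congr_fun fun n => ?_
  · rw [norm_mul, norm_real, Real.norm_eq_abs, two_mul]
    refine mul_le_mul_of_nonneg_left ((norm_sub_le _ _).trans (add_le_add ?_ ?_))
      (abs_nonneg _) <;> rw [norm_mul, norm_cexp_I_mul_mul, mul_one]
  · simp only [tsum_mul_right]
    exact (hφ.norm.const_mul 2).const_mul _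
  · filter_upwards [ae_restrict_mem measurableSet_Icc] with ω hω
    rw [mul_assoc]
    refine ((hasSum_bernsteinCoeff_mul_cexp_sub hΩ hω).mul_right (φ ω * exp (I * ω * u))
      ).congr_fun fun n => ?_
    rw [sub_eq_add_neg u, ofReal_add, ofReal_add, mul_add, mul_add, Complex.exp_add,
      Complex.exp_add]
    ring
  · rw [integral_const_mul, integral_sub (hφ.mul_cexp_I_mul _) (hφ.mul_cexp_I_mul _)]
    rfl

theorem norm_bandlimited_I_mul_le (hΩ : 0 < Ω)
    (hφ : Integrable φ (volume.restrict (Icc (-Ω) Ω))) {β : ℝ}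
    (hβ : ∀ t, ‖bandlimited Ω φ t‖ ≤ β) (u : ℝ) :
    ‖bandlimited Ω (fun ω => I * ω * φ ω) u‖ ≤ Ω * β := by
  have hsum := (hasSum_abs_bernsteinCoeff hΩ.le).mul_right (2 * β)
  rw [show Ω / 2 * (2 * β) = Ω * β by ring] at hsum
  refine (hasSum_bandlimited_I_mul hΩ hφ u).norm_le_of_bounded hsum fun n => ?_
  rw [norm_mul, norm_real, Real.norm_eq_abs, two_mul]
  exact mul_le_mul_of_nonneg_left ((norm_sub_le _ _).trans (add_le_add (hβ _) (hβ _)))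
    (abs_nonneg _)

lemma norm_bandlimited_add_sub_le (hΩ : 0 < Ω)
    (hφ : Integrable φ (volume.restrict (Icc (-Ω) Ω))) {β : ℝ}
    (hβ : ∀ t, ‖bandlimited Ω φ t‖ ≤ β) (t T : ℝ) :
    ‖bandlimited Ω φ (t + T) - bandlimited Ω φ t‖ ≤ |T| * Ω * β := by
  have := convex_univ.norm_image_sub_le_of_norm_hasDerivWithin_le
    (fun x _ => (hasDerivAt_bandlimited hφ x).hasDerivWithinAt)
    (fun x _ => norm_bandlimited_I_mul_le hΩ hφ hβ x) (mem_univ t) (mem_univ (t + T))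
  rwa [add_sub_cancel_left, Real.norm_eq_abs, mul_comm, ← mul_assoc] at this

theorem norm_fwdDiff_iter_bandlimited_le (hΩ : 0 < Ω)
    (hφ : Integrable φ (volume.restrict (Icc (-Ω) Ω))) {β : ℝ}
    (hβ : ∀ t, ‖bandlimited Ω φ t‖ ≤ β) (T : ℝ) (n : ℕ) (t : ℝ) :
    ‖(Δ_[T])^[n] (bandlimited Ω φ) t‖ ≤ (|T| * Ω) ^ n * β := by
  induction n generalizing φ β with
  | zero => simpa using hβ t
  | succ n ih =>
    rw [Function.iterate_succ_apply, fwdDiff_bandlimited hφ, pow_succ, mul_assoc]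
    refine ih (hφ.cexp_I_mul_sub_one_mul T) fun s => ?_
    rw [← fwdDiff_bandlimited hφ]
    exact norm_bandlimited_add_sub_le hΩ hφ hβ s T

end bandlimited

theorem abs_fwdDiff_iter_le_of_isPW {Ω β : ℝ} {g : ℝ → ℝ} (hΩ : 0 < Ω) (hg : IsPW Ω g)
    (hβ : ∀ t, |g t| ≤ β) (T : ℝ) (n : ℕ) (t : ℝ) :
    |(Δ_[T])^[n] g t| ≤ (|T| * Ω) ^ n * β := by
  obtain ⟨φ, hφ, hgφ⟩ := hg
  have hgφ' : bandlimited Ω φ = ofRealHom.toAddMonoidHom ∘ g := (funext hgφ).symm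
  have := norm_fwdDiff_iter_bandlimited_le hΩ (hφ.integrable one_le_two)
    (fun t => by rw [hgφ', Function.comp_apply]; simpa using hβ t) T n t
  rwa [hgφ', fwdDiff_iter_addMonoidHom_comp, Function.comp_apply, RingHom.toAddMonoidHom_eq_coe,
    AddMonoidHom.coe_coe, ofRealHom_eq_coe, norm_real, Real.norm_eq_abs] at this

lemma fdiff_iter_comp_mul (g : ℝ → ℝ) (T : ℝ) (n : ℕ) (k : ℤ) :
    fdiff^[n] (fun m : ℤ => g (m * T)) k = (Δ_[T])^[n] g (k * T) := by
  have := fwdDiff_iter_comp_addMonoidHom ((AddMonoidHom.mulRight T).comp (Int.castAddHom ℝ)) 1 g n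
  simp only [AddMonoidHom.coe_comp, AddMonoidHom.coe_mulRight, Int.coe_castAddHom,
    Function.comp_def, Int.cast_one, one_mul] at this
  exact congrFun this k

theorem stmt12 (Ω lam T : ℝ) (hΩ : 0 < Ω) (hlam : 0 < lam) (hT : 0 < T) (N : ℕ)
    (g : ℝ → ℝ) (hg : IsPW Ω g) (β : ℝ) (hβ : ∀ t : ℝ, |g t| ≤ β)
    (hN : (T * Ω * Real.exp 1) ^ N * β < lam) :
    (∀ k : ℤ, fdiff^[N] (fun m : ℤ => g (m * T)) k =
      Mlam lam (fdiff^[N] (fun m : ℤ => Mlam lam (g (m * T))) k)) ∧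
    (∀ k : ℤ, ∃ j : ℤ, g (k * T) - Mlam lam (g (k * T)) = 2 * lam * j) ∧
    (∀ k : ℤ, fdiff^[N] (fun m : ℤ => g (m * T) - Mlam lam (g (m * T))) k =
      Mlam lam (fdiff^[N] (fun m : ℤ => Mlam lam (g (m * T))) k) -
        fdiff^[N] (fun m : ℤ => Mlam lam (g (m * T))) k) := by
  have hbound (k : ℤ) : |fdiff^[N] (fun m : ℤ => g (m * T)) k| < lam := by
    have hβ0 : 0 ≤ β := (abs_nonneg _).trans (hβ 0)
    have hbase : |T| * Ω ≤ T * Ω * Real.exp 1 := by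
      rw [abs_of_pos hT]
      exact le_mul_of_one_le_right (by positivity) (Real.one_le_exp zero_le_one)
    calc |fdiff^[N] (fun m : ℤ => g (m * T)) k|
        ≤ (|T| * Ω) ^ N * β := by
          rw [fdiff_iter_comp_mul]
          exact abs_fwdDiff_iter_le_of_isPW hΩ hg hβ T N _
      _ ≤ (T * Ω * Real.exp 1) ^ N * β :=
          mul_le_mul_of_nonneg_right (pow_le_pow_left₀ (by positivity) hbase N) hβ0
      _ < lam := hN
  have hrecover (k : ℤ) : fdiff^[N] (fun m : ℤ => g (m * T)) k =
      Mlam lam (fdiff^[N] (fun m : ℤ => Mlam lam (g (m * T))) k) :=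
    (Mlam_fwdDiff_iter_Mlam hlam 1 _ N (hbound k)).symm
  refine ⟨hrecover, fun k => ?_, fun k => ?_⟩
  · obtain ⟨j, hj : j • (2 * lam) = _⟩ := sub_Mlam_mem_zmultiples lam (g (k * T))
    exact ⟨j, by rw [← hj, zsmul_eq_mul, mul_comm]⟩
  · rw [fdiff_eq_fwdDiff, fwdDiff_iter_sub, ← fdiff_eq_fwdDiff, hrecover k]
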